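/- Let ε > 0, ω ≥ 1/ε², set β = ω − 1/ε² and assume βε² ≤ 1 (i.e. ω ≤ 2/ε²). Let H : [0,s] → ℂ be continuously differentiable. Then |∫₀ˢ (sin(ω(θ−s))/(ε²ω)) e^{3iθ/ε²} H(θ) dθ| ≤ (1/(4ω) + 1/(8ω))·( |H(s)| + |H(0)| + ∫₀ˢ (|H'(θ)| + β|H(θ)|) dθ ). -/

import Mathlib

open intervalIntegral MeasureTheory Set Complex

lemma osc_bound (s : ℝ) (hs : 0 ≤ s) (c : ℝ) (hc : 0 < c)
    (G G' : ℝ → ℂ) (hG : ContinuousOn G (Set.Icc 0 s))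
    (hG' : ContinuousOn G' (Set.Icc 0 s))
    (hderiv : ∀ x ∈ Set.Ioo 0 s, HasDerivAt G (G' x) x) :
    ‖∫ θ in (0:ℝ)..s, Complex.exp ((c:ℂ) * Complex.I * θ) * G θ‖
      ≤ (‖G s‖ + ‖G 0‖ + ∫ θ in (0:ℝ)..s, ‖G' θ‖) / c := by
  have hcI : (c:ℂ) * Complex.I ≠ 0 := by
    simp [Complex.ext_iff, hc.ne']
  have hecont : Continuous fun θ : ℝ => Complex.exp ((c:ℂ) * Complex.I * θ) := by
    fun_prop
  have hexp : ∀ θ : ℝ, HasDerivAt (fun t : ℝ => Complex.exp ((c:ℂ) * Complex.I * t))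
      ((c:ℂ) * Complex.I * Complex.exp ((c:ℂ) * Complex.I * θ)) θ := by
    intro θ
    have h1 : HasDerivAt (fun t : ℝ => (t : ℂ)) 1 θ := by
      simpa using (hasDerivAt_id θ).ofReal_comp
    have h2 := (h1.const_mul ((c:ℂ) * Complex.I)).cexp
    simpa [mul_comm] using h2
  set F : ℝ → ℂ := fun θ => Complex.exp ((c:ℂ) * Complex.I * θ) * G θ / ((c:ℂ) * Complex.I)
    with hF
  set g : ℝ → ℂ := fun θ => Complex.exp ((c:ℂ) * Complex.I * θ) * G θ
    + Complex.exp ((c:ℂ) * Complex.I * θ) * G' θ / ((c:ℂ) * Complex.I) with hg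
  have hGint : IntervalIntegrable (fun θ => Complex.exp ((c:ℂ) * Complex.I * θ) * G θ)
      volume 0 s := by
    apply ContinuousOn.intervalIntegrable
    rw [Set.uIcc_of_le hs]
    exact (hecont.continuousOn).mul hG
  have hG'int : IntervalIntegrable
      (fun θ => Complex.exp ((c:ℂ) * Complex.I * θ) * G' θ / ((c:ℂ) * Complex.I))
      volume 0 s := by
    apply ContinuousOn.intervalIntegrable
    rw [Set.uIcc_of_le hs]
    exact ((hecont.continuousOn).mul hG').div_const _
  have hgint : IntervalIntegrable g volume 0 s := hGint.add hG'int
  have key : ∫ θ in (0:ℝ)..s, g θ = F s - F 0 := by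
    apply integral_eq_sub_of_hasDeriv_right_of_le hs
    · exact ((hecont.continuousOn).mul hG).div_const _
    · intro x hx
      refine HasDerivAt.hasDerivWithinAt ?_
      have h := ((hexp x).mul (hderiv x hx)).div_const ((c:ℂ) * Complex.I)
      refine h.congr_deriv ?_
      simp only [hg]
      field_simp [Complex.ofReal_ne_zero.mpr hc.ne']
    · exact hgint
  have split : ∫ θ in (0:ℝ)..s, Complex.exp ((c:ℂ) * Complex.I * θ) * G θ
      = (F s - F 0) - ∫ θ in (0:ℝ)..s,
          Complex.exp ((c:ℂ) * Complex.I * θ) * G' θ / ((c:ℂ) * Complex.I) := by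
    have h := intervalIntegral.integral_add hGint hG'int
    rw [← hg] at h
    rw [key] at h
    rw [h]; ring
  have hnormexp : ∀ θ : ℝ, ‖Complex.exp ((c:ℂ) * Complex.I * θ)‖ = 1 := by
    intro θ
    rw [Complex.norm_exp]
    simp
  have hnormcI : ‖(c:ℂ) * Complex.I‖ = c := by
    simp [abs_of_pos hc]
  have hFnorm : ∀ θ : ℝ, ‖F θ‖ = ‖G θ‖ / c := by
    intro θ
    rw [hF]
    simp only [norm_div, norm_mul, hnormexp, hnormcI, one_mul]
  have hIb : ‖∫ θ in (0:ℝ)..s,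
      Complex.exp ((c:ℂ) * Complex.I * θ) * G' θ / ((c:ℂ) * Complex.I)‖
      ≤ (∫ θ in (0:ℝ)..s, ‖G' θ‖) / c := by
    have h1 := intervalIntegral.norm_integral_le_integral_norm
      (f := fun θ => Complex.exp ((c:ℂ) * Complex.I * θ) * G' θ / ((c:ℂ) * Complex.I)) (μ := MeasureTheory.volume) hs
    calc ‖∫ θ in (0:ℝ)..s,
        Complex.exp ((c:ℂ) * Complex.I * θ) * G' θ / ((c:ℂ) * Complex.I)‖
        ≤ ∫ θ in (0:ℝ)..s,
          ‖Complex.exp ((c:ℂ) * Complex.I * θ) * G' θ / ((c:ℂ) * Complex.I)‖ := h1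
      _ = ∫ θ in (0:ℝ)..s, ‖G' θ‖ / c := by
          congr 1
          ext θ
          simp only [norm_div, norm_mul, hnormexp, hnormcI, one_mul]
      _ = (∫ θ in (0:ℝ)..s, ‖G' θ‖) / c := intervalIntegral.integral_div c _
  rw [split]
  calc ‖(F s - F 0) - ∫ θ in (0:ℝ)..s,
      Complex.exp ((c:ℂ) * Complex.I * θ) * G' θ / ((c:ℂ) * Complex.I)‖
      ≤ ‖F s - F 0‖ + ‖∫ θ in (0:ℝ)..s,
        Complex.exp ((c:ℂ) * Complex.I * θ) * G' θ / ((c:ℂ) * Complex.I)‖ := norm_sub_le _ _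
    _ ≤ (‖F s‖ + ‖F 0‖) + (∫ θ in (0:ℝ)..s, ‖G' θ‖) / c := by
        gcongr
        exact norm_sub_le _ _
    _ = (‖G s‖ + ‖G 0‖ + ∫ θ in (0:ℝ)..s, ‖G' θ‖) / c := by
        rw [hFnorm, hFnorm]
        field_simp

theorem stmt_4 (ε ω β s : ℝ) (hε : 0 < ε) (hω : 1 / ε^2 ≤ ω)
    (hβ : β = ω - 1 / ε^2) (hβ1 : β * ε^2 ≤ 1) (hs : 0 ≤ s)
    (H : ℝ → ℂ) (hH : ContDiffOn ℝ 1 H (Set.Icc 0 s)) :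
    ‖∫ θ in (0:ℝ)..s,
        ((Real.sin (ω * (θ - s)) / (ε^2 * ω) : ℝ) : ℂ)
          * Complex.exp (3 * Complex.I * (θ:ℂ) / (ε:ℂ)^2) * H θ‖
      ≤ (1 / (4 * ω) + 1 / (8 * ω)) *
        (‖H s‖ + ‖H 0‖ + ∫ θ in (0:ℝ)..s, (‖deriv H θ‖ + β * ‖H θ‖)) := by
  have hε2 : (0:ℝ) < ε^2 := by positivity
  have hω0 : (0:ℝ) < ω := lt_of_lt_of_le (by positivity) hω
  have hβ0 : 0 ≤ β := by rw [hβ]; linarith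
  have hεC : (ε:ℂ) ≠ 0 := Complex.ofReal_ne_zero.mpr hε.ne'
  rcases eq_or_lt_of_le hs with rfl | hs'
  · simp only [intervalIntegral.integral_same, norm_zero]
    positivity
  -- derivative within
  set D : ℝ → ℂ := derivWithin H (Set.Icc 0 s) with hD
  have hDc : ContinuousOn D (Set.Icc 0 s) :=
    hH.continuousOn_derivWithin (uniqueDiffOn_Icc hs') le_rfl
  have hHc : ContinuousOn H (Set.Icc 0 s) := hH.continuousOn
  have hHd : ∀ x ∈ Set.Ioo 0 s, HasDerivAt H (D x) x := by
    intro x hx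
    have h1 : DifferentiableWithinAt ℝ H (Set.Icc 0 s) x :=
      (hH.differentiableOn one_ne_zero) x (Set.Ioo_subset_Icc_self hx)
    exact h1.hasDerivWithinAt.hasDerivAt (Icc_mem_nhds hx.1 hx.2)
  -- helpers
  have hexpd : ∀ (b : ℝ) (θ : ℝ),
      HasDerivAt (fun t : ℝ => Complex.exp ((b:ℂ) * Complex.I * t))
        ((b:ℂ) * Complex.I * Complex.exp ((b:ℂ) * Complex.I * θ)) θ := by
    intro b θ
    have h1 : HasDerivAt (fun t : ℝ => (t : ℂ)) 1 θ := by
      simpa using (hasDerivAt_id θ).ofReal_comp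
    have h2 := (h1.const_mul ((b:ℂ) * Complex.I)).cexp
    simpa [mul_comm] using h2
  have hecont : ∀ b : ℝ, Continuous fun θ : ℝ => Complex.exp ((b:ℂ) * Complex.I * θ) := by
    intro b; fun_prop
  have hnormexp : ∀ (b θ : ℝ), ‖Complex.exp ((b:ℂ) * Complex.I * θ)‖ = 1 := by
    intro b θ
    rw [Complex.norm_exp]
    simp
  -- the G functions
  set G₁ : ℝ → ℂ := fun θ => Complex.exp ((β:ℂ) * Complex.I * θ) * H θ with hG₁
  set G₁' : ℝ → ℂ := fun θ =>
    Complex.exp ((β:ℂ) * Complex.I * θ) * ((β:ℂ) * Complex.I * H θ + D θ) with hG₁'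
  set G₂ : ℝ → ℂ := fun θ => Complex.exp ((↑(-β):ℂ) * Complex.I * θ) * H θ with hG₂
  set G₂' : ℝ → ℂ := fun θ =>
    Complex.exp ((↑(-β):ℂ) * Complex.I * θ) * ((↑(-β):ℂ) * Complex.I * H θ + D θ) with hG₂'
  have hG₁c : ContinuousOn G₁ (Set.Icc 0 s) := ((hecont β).continuousOn).mul hHc
  have hG₂c : ContinuousOn G₂ (Set.Icc 0 s) := ((hecont (-β)).continuousOn).mul hHc
  have hG₁'c : ContinuousOn G₁' (Set.Icc 0 s) := by
    apply ((hecont β).continuousOn).mul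
    exact (continuousOn_const.mul hHc).add hDc
  have hG₂'c : ContinuousOn G₂' (Set.Icc 0 s) := by
    apply ((hecont (-β)).continuousOn).mul
    exact (continuousOn_const.mul hHc).add hDc
  have hG₁d : ∀ x ∈ Set.Ioo 0 s, HasDerivAt G₁ (G₁' x) x := by
    intro x hx
    have h := (hexpd β x).mul (hHd x hx)
    rw [hG₁, hG₁']
    refine h.congr_deriv ?_
    ring
  have hG₂d : ∀ x ∈ Set.Ioo 0 s, HasDerivAt G₂ (G₂' x) x := by
    intro x hx
    have h := (hexpd (-β) x).mul (hHd x hx)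
    rw [hG₂, hG₂']
    refine h.congr_deriv ?_
    ring
  -- oscillation bounds
  have hc₁ : (0:ℝ) < 4 / ε^2 := by positivity
  have hc₂ : (0:ℝ) < 2 / ε^2 := by positivity
  have b₁ := osc_bound s hs (4 / ε^2) hc₁ G₁ G₁' hG₁c hG₁'c hG₁d
  have b₂ := osc_bound s hs (2 / ε^2) hc₂ G₂ G₂' hG₂c hG₂'c hG₂d
  -- the splitting identity
  set A : ℂ := -Complex.I * Complex.exp (-(ω:ℂ) * Complex.I * s) / (2 * (ε:ℂ)^2 * ω) with hA
  set B : ℂ := -Complex.I * Complex.exp ((ω:ℂ) * Complex.I * s) / (2 * (ε:ℂ)^2 * ω) with hB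
  have hpt : ∀ θ : ℝ,
      ((Real.sin (ω * (θ - s)) / (ε^2 * ω) : ℝ) : ℂ)
          * Complex.exp (3 * Complex.I * (θ:ℂ) / (ε:ℂ)^2) * H θ
        = A * (Complex.exp (((4/ε^2 : ℝ):ℂ) * Complex.I * θ) * G₁ θ)
          - B * (Complex.exp (((2/ε^2 : ℝ):ℂ) * Complex.I * θ) * G₂ θ) := by
    intro θ
    simp only [hG₁, hG₂, hA, hB]
    rw [Complex.ofReal_div, Complex.ofReal_sin, Complex.sin]
    have h1 : Complex.exp (-(↑(ω * (θ - s))) * Complex.I)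
        * Complex.exp (3 * Complex.I * (θ:ℂ) / (ε:ℂ)^2)
        = Complex.exp ((ω:ℂ) * Complex.I * s)
          * (Complex.exp (((2/ε^2 : ℝ):ℂ) * Complex.I * θ)
            * Complex.exp ((↑(-β):ℂ) * Complex.I * θ)) := by
      rw [← Complex.exp_add, ← Complex.exp_add, ← Complex.exp_add]
      congr 1
      subst hβ
      push_cast
      field_simp
      ring
    have h2 : Complex.exp ((↑(ω * (θ - s))) * Complex.I)
        * Complex.exp (3 * Complex.I * (θ:ℂ) / (ε:ℂ)^2)
        = Complex.exp (-(ω:ℂ) * Complex.I * s)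
          * (Complex.exp (((4/ε^2 : ℝ):ℂ) * Complex.I * θ)
            * Complex.exp ((β:ℂ) * Complex.I * θ)) := by
      rw [← Complex.exp_add, ← Complex.exp_add, ← Complex.exp_add]
      congr 1
      subst hβ
      push_cast
      field_simp
      ring
    have hωC : (ω:ℂ) ≠ 0 := Complex.ofReal_ne_zero.mpr hω0.ne'
    push_cast at h1 h2 ⊢
    ring_nf at h1 h2 ⊢
    linear_combination (Complex.I * H θ / (2*(ε:ℂ)^2*(ω:ℂ))) * h1
      - (Complex.I * H θ / (2*(ε:ℂ)^2*(ω:ℂ))) * h2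
  -- integrability
  have hint₁ : IntervalIntegrable
      (fun θ => Complex.exp (((4/ε^2 : ℝ):ℂ) * Complex.I * θ) * G₁ θ) volume 0 s := by
    apply ContinuousOn.intervalIntegrable
    rw [Set.uIcc_of_le hs]
    exact ((hecont _).continuousOn).mul hG₁c
  have hint₂ : IntervalIntegrable
      (fun θ => Complex.exp (((2/ε^2 : ℝ):ℂ) * Complex.I * θ) * G₂ θ) volume 0 s := by
    apply ContinuousOn.intervalIntegrable
    rw [Set.uIcc_of_le hs]
    exact ((hecont _).continuousOn).mul hG₂c
  have hsplit : (∫ θ in (0:ℝ)..s,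
        ((Real.sin (ω * (θ - s)) / (ε^2 * ω) : ℝ) : ℂ)
          * Complex.exp (3 * Complex.I * (θ:ℂ) / (ε:ℂ)^2) * H θ)
      = A * (∫ θ in (0:ℝ)..s, Complex.exp (((4/ε^2 : ℝ):ℂ) * Complex.I * θ) * G₁ θ)
        - B * (∫ θ in (0:ℝ)..s, Complex.exp (((2/ε^2 : ℝ):ℂ) * Complex.I * θ) * G₂ θ) := by
    rw [← intervalIntegral.integral_const_mul, ← intervalIntegral.integral_const_mul,
      ← intervalIntegral.integral_sub (hint₁.const_mul A) (hint₂.const_mul B)]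
    exact intervalIntegral.integral_congr (fun θ _ => hpt θ)
  -- norms of A and B
  have hnA : ‖A‖ = 1 / (2 * ε^2 * ω) := by
    rw [hA, norm_div, norm_mul, norm_mul, norm_mul]
    rw [Complex.norm_exp]
    simp [_root_.abs_of_pos hε2, _root_.abs_of_pos hω0, _root_.sq_abs,
      _root_.abs_of_pos hε]
  have hnB : ‖B‖ = 1 / (2 * ε^2 * ω) := by
    rw [hB, norm_div, norm_mul, norm_mul, norm_mul]
    rw [Complex.norm_exp]
    simp [_root_.abs_of_pos hε2, _root_.abs_of_pos hω0, _root_.sq_abs,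
      _root_.abs_of_pos hε]
  -- RHS integral rewriting
  have hJint : IntervalIntegrable (fun θ => ‖D θ‖ + β * ‖H θ‖) volume 0 s := by
    apply ContinuousOn.intervalIntegrable
    rw [Set.uIcc_of_le hs]
    exact hDc.norm.add (continuousOn_const.mul hHc.norm)
  have hRHS : (∫ θ in (0:ℝ)..s, (‖deriv H θ‖ + β * ‖H θ‖))
      = ∫ θ in (0:ℝ)..s, (‖D θ‖ + β * ‖H θ‖) := by
    apply intervalIntegral.integral_congr_ae
    have h1 : ∀ᵐ x : ℝ, x ≠ s := by
      have h2 : (MeasureTheory.volume ({s} : Set ℝ)) = 0 := MeasureTheory.measure_singleton s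
      have h3 := MeasureTheory.measure_eq_zero_iff_ae_notMem.mp h2
      simpa using h3
    filter_upwards [h1] with x hx hx2
    rw [Set.uIoc_of_le hs] at hx2
    have hxo : x ∈ Set.Ioo 0 s := ⟨hx2.1, lt_of_le_of_ne hx2.2 hx⟩
    rw [(hHd x hxo).deriv]
  -- bound ∫ ‖Gᵢ'‖ by J
  set J : ℝ := ∫ θ in (0:ℝ)..s, (‖D θ‖ + β * ‖H θ‖) with hJ
  have hJ0 : 0 ≤ J := by
    rw [hJ]
    apply intervalIntegral.integral_nonneg hs
    intro x _
    positivity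
  have hb₁J : (∫ θ in (0:ℝ)..s, ‖G₁' θ‖) ≤ J := by
    apply intervalIntegral.integral_mono_on hs _ hJint
    · intro x _
      rw [hG₁']
      simp only [norm_mul, hnormexp, one_mul]
      calc ‖(β:ℂ) * Complex.I * H x + D x‖ ≤ ‖(β:ℂ) * Complex.I * H x‖ + ‖D x‖ :=
            norm_add_le _ _
        _ = β * ‖H x‖ + ‖D x‖ := by
            simp [norm_mul, _root_.abs_of_nonneg hβ0]
        _ = ‖D x‖ + β * ‖H x‖ := by ring
    · apply ContinuousOn.intervalIntegrable
      rw [Set.uIcc_of_le hs]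
      exact hG₁'c.norm
  have hb₂J : (∫ θ in (0:ℝ)..s, ‖G₂' θ‖) ≤ J := by
    apply intervalIntegral.integral_mono_on hs _ hJint
    · intro x _
      rw [hG₂']
      simp only [norm_mul, hnormexp, one_mul]
      calc ‖(↑(-β):ℂ) * Complex.I * H x + D x‖ ≤ ‖(↑(-β):ℂ) * Complex.I * H x‖ + ‖D x‖ :=
            norm_add_le _ _
        _ = β * ‖H x‖ + ‖D x‖ := by
            simp [norm_mul, _root_.abs_of_nonneg hβ0]
        _ = ‖D x‖ + β * ‖H x‖ := by ring
    · apply ContinuousOn.intervalIntegrable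
      rw [Set.uIcc_of_le hs]
      exact hG₂'c.norm
  -- norms of G values
  have hnG₁s : ‖G₁ s‖ = ‖H s‖ := by rw [hG₁]; simp only [norm_mul, hnormexp, one_mul]
  have hnG₁0 : ‖G₁ 0‖ = ‖H 0‖ := by rw [hG₁]; simp only [norm_mul, hnormexp, one_mul]
  have hnG₂s : ‖G₂ s‖ = ‖H s‖ := by rw [hG₂]; simp only [norm_mul, hnormexp, one_mul]
  have hnG₂0 : ‖G₂ 0‖ = ‖H 0‖ := by rw [hG₂]; simp only [norm_mul, hnormexp, one_mul]
  -- put it together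
  set M : ℝ := ‖H s‖ + ‖H 0‖ + J with hM
  have hM0 : 0 ≤ M := by positivity
  have hb₁' : ‖∫ θ in (0:ℝ)..s, Complex.exp (((4/ε^2 : ℝ):ℂ) * Complex.I * θ) * G₁ θ‖
      ≤ M / (4 / ε^2) := by
    refine b₁.trans ?_
    rw [hnG₁s, hnG₁0]
    gcongr
    simp only [hM]
    linarith [hb₁J]
  have hb₂' : ‖∫ θ in (0:ℝ)..s, Complex.exp (((2/ε^2 : ℝ):ℂ) * Complex.I * θ) * G₂ θ‖
      ≤ M / (2 / ε^2) := by
    refine b₂.trans ?_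
    rw [hnG₂s, hnG₂0]
    gcongr
    simp only [hM]
    linarith [hb₂J]
  rw [hsplit, hRHS]
  calc ‖A * (∫ θ in (0:ℝ)..s, Complex.exp (((4/ε^2 : ℝ):ℂ) * Complex.I * θ) * G₁ θ)
        - B * (∫ θ in (0:ℝ)..s, Complex.exp (((2/ε^2 : ℝ):ℂ) * Complex.I * θ) * G₂ θ)‖
      ≤ ‖A‖ * ‖∫ θ in (0:ℝ)..s, Complex.exp (((4/ε^2 : ℝ):ℂ) * Complex.I * θ) * G₁ θ‖
        + ‖B‖ * ‖∫ θ in (0:ℝ)..s, Complex.exp (((2/ε^2 : ℝ):ℂ) * Complex.I * θ) * G₂ θ‖ := by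
        refine (norm_sub_le _ _).trans ?_
        rw [norm_mul, norm_mul]
    _ ≤ (1 / (2 * ε^2 * ω)) * (M / (4 / ε^2)) + (1 / (2 * ε^2 * ω)) * (M / (2 / ε^2)) := by
        rw [hnA, hnB]
        gcongr
    _ = (1 / (4 * ω) + 1 / (8 * ω)) * M := by
        field_simp
        ring
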